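/- Inner estimation of the distributionally robust safe set (Proposition 1): Fix a family B of Borel probability measures on W and define for each m ∈ [M] the set X_m := { x ∈ 𝒳 : sup_{Q ∈ B} CVaR_β^Q[ b_m + A_mᵀ w + d_min − A_mᵀ C x ] ≤ 0 }, where g(x, w) := d_min − dist(Cx, O_w). Then for every x ∈ ∪_{m=1}^M X_m it holds that sup_{Q ∈ B} CVaR_β^Q[ g(x, w) ] ≤ 0. -/

import Mathlib

open MeasureTheory RealInnerProductSpace

/-- Conditional value-at-risk via the Rockafellar–Uryasev infimum formula. -/
noncomputable def cvar {Ω : Type*} [MeasurableSpace Ω] (μ : Measure Ω) (β : ℝ) (Z : Ω → ℝ) : ℝ :=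
  ⨅ t : ℝ, (t + β⁻¹ * ∫ ω, max (Z ω - t) 0 ∂μ)

/-! Every point of `O + w` lies in the half-space `⟪A m, ·⟫ ≤ b m + ⟪A m, w⟫`, whose distance from
`C x` is at least `⟪A m, C x⟫ - b m - ⟪A m, w⟫` because `‖A m‖ = 1`. So `g(x, ·)` lies pointwise
below the affine loss of the hypothesis, and CVaR is monotone. Monotonicity of the infimum needs the
Rockafellar–Uryasev objective to be bounded below; for `β ≤ 1` the mean is such a bound. -/

theorem Continuous.integrable_of_ae_mem_isCompact {X E : Type*} [TopologicalSpace X]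
    [T2Space X] [MeasurableSpace X] [OpensMeasurableSpace X] [NormedAddCommGroup E]
    {μ : Measure X} [IsFiniteMeasureOnCompacts μ] {K : Set X} (hK : IsCompact K)
    (hμK : ∀ᵐ x ∂μ, x ∈ K) {f : X → E} (hf : Continuous f) : Integrable f μ := by
  rw [← Measure.restrict_eq_self_of_ae_mem hμK]
  exact hf.continuousOn.integrableOn_compact hK

section Cvar

variable {Ω : Type*} [MeasurableSpace Ω] {μ : Measure Ω} {β : ℝ} {Y Z : Ω → ℝ}

theorem integral_le_cvar_objective [IsProbabilityMeasure μ] (hβ₀ : 0 < β) (hβ₁ : β ≤ 1)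
    (hY : Integrable Y μ) (t : ℝ) :
    ∫ ω, Y ω ∂μ ≤ t + β⁻¹ * ∫ ω, max (Y ω - t) 0 ∂μ := by
  have hexcess : ∫ ω, Y ω ∂μ - t ≤ ∫ ω, max (Y ω - t) 0 ∂μ := by
    calc ∫ ω, Y ω ∂μ - t = ∫ ω, (Y ω - t) ∂μ := by
          rw [integral_sub hY (integrable_const t), integral_const, probReal_univ, one_smul]
      _ ≤ ∫ ω, max (Y ω - t) 0 ∂μ :=
          integral_mono (hY.sub (integrable_const t)) ((hY.sub (integrable_const t)).pos_part)
            fun ω => le_max_left _ _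
  have hβinv : 1 ≤ β⁻¹ := one_le_inv₀ hβ₀ |>.mpr hβ₁
  have hnonneg : 0 ≤ ∫ ω, max (Y ω - t) 0 ∂μ := integral_nonneg fun ω => le_max_right _ _
  nlinarith

theorem cvar_mono [IsProbabilityMeasure μ] (hβ₀ : 0 < β) (hβ₁ : β ≤ 1)
    (hY : Integrable Y μ) (hZ : Integrable Z μ) (hYZ : Y ≤ᵐ[μ] Z) :
    cvar μ β Y ≤ cvar μ β Z := by
  refine ciInf_mono ⟨_, Set.forall_mem_range.2 (integral_le_cvar_objective hβ₀ hβ₁ hY)⟩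
    fun t => ?_
  have hexcess : ∫ ω, max (Y ω - t) 0 ∂μ ≤ ∫ ω, max (Z ω - t) 0 ∂μ := by
    refine integral_mono_of_nonneg (.of_forall fun ω => le_max_right _ _)
      (hZ.sub (integrable_const t)).pos_part ?_
    filter_upwards [hYZ] with ω hω
    gcongr
  gcongr

end Cvar

theorem Metric.infDist_image_add_right {E : Type*} [SeminormedAddCommGroup E] (q w : E)
    (S : Set E) : Metric.infDist q ((· + w) '' S) = Metric.infDist (q - w) S := by
  simpa using Metric.infDist_image (x := q - w) (t := S) (isometry_add_right w)

section Halfspace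

variable {E : Type*} [NormedAddCommGroup E] [InnerProductSpace ℝ E]

theorem inner_sub_le_infDist_of_subset_halfspace {a q : E} {c : ℝ} {S : Set E}
    (ha : ‖a‖ ≤ 1) (hS : S.Nonempty) (hSc : S ⊆ {p | ⟪a, p⟫ ≤ c}) :
    ⟪a, q⟫ - c ≤ Metric.infDist q S := by
  refine le_of_not_gt fun hlt => ?_
  obtain ⟨p, hp, hdist⟩ := (Metric.infDist_lt_iff hS).1 hlt
  have hpc : ⟪a, p⟫ ≤ c := hSc hp
  have hinner : ⟪a, q - p⟫ ≤ dist q p := by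
    calc ⟪a, q - p⟫ ≤ ‖a‖ * ‖q - p‖ := real_inner_le_norm _ _
      _ ≤ ‖q - p‖ := mul_le_of_le_one_left (norm_nonneg _) ha
      _ = dist q p := (dist_eq_norm q p).symm
  rw [inner_sub_right] at hinner
  linarith

end Halfspace

theorem inner_estimate_DR_safe_set_general {nx np M : ℕ}
    (W : Set (EuclideanSpace ℝ (Fin np))) (hW : IsCompact W)
    (C : EuclideanSpace ℝ (Fin nx) →ₗ[ℝ] EuclideanSpace ℝ (Fin np))
    (A : Fin M → EuclideanSpace ℝ (Fin np)) (b : Fin M → ℝ)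
    (hA : ∀ m, ‖A m‖ = 1)
    (hOne : ({p : EuclideanSpace ℝ (Fin np) | ∀ m', ⟪A m', p⟫ ≤ b m'}).Nonempty)
    (dmin β : ℝ) (hβ : β ∈ Set.Ioo (0 : ℝ) 1)
    (B : Set (Measure (EuclideanSpace ℝ (Fin np))))
    (hB : ∀ Q ∈ B, IsProbabilityMeasure Q ∧ Q Wᶜ = 0)
    (x : EuclideanSpace ℝ (Fin nx))
    (hm : ∃ m : Fin M, ∀ Q ∈ B,
      cvar Q β (fun w => b m + ⟪A m, w⟫ + dmin - ⟪A m, C x⟫) ≤ 0) :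
    ∀ Q ∈ B, cvar Q β (fun w => dmin - Metric.infDist (C x)
      ((fun p => p + w) '' {p : EuclideanSpace ℝ (Fin np) | ∀ m', ⟪A m', p⟫ ≤ b m'})) ≤ 0 := by
  intro Q hQ
  obtain ⟨hprob, hQW⟩ := hB Q hQ
  obtain ⟨m, hm⟩ := hm
  have hint {f : EuclideanSpace ℝ (Fin np) → ℝ} (hf : Continuous f) : Integrable f Q :=
    hf.integrable_of_ae_mem_isCompact hW (ae_iff.2 hQW)
  refine (cvar_mono hβ.1 hβ.2.le (hint ?_) (hint (by fun_prop)) (.of_forall fun w => ?_)).trans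
    (hm Q hQ)
  · simp_rw [Metric.infDist_image_add_right]
    exact continuous_const.sub
      ((Metric.continuous_infDist_pt _).comp (continuous_const.sub continuous_id))
  · have hhalf : (· + w) '' {p | ∀ m', ⟪A m', p⟫ ≤ b m'} ⊆ {p | ⟪A m, p⟫ ≤ b m + ⟪A m, w⟫} := by
      rintro _ ⟨p, hp, rfl⟩
      simpa [inner_add_right] using hp m
    have hdist := inner_sub_le_infDist_of_subset_halfspace (q := C x) (hA m).le (hOne.image _) hhalf
    linarith

theorem inner_estimate_DR_safe_set {nx np M : ℕ}
    (W : Set (EuclideanSpace ℝ (Fin np))) (hW : IsCompact W)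
    (X : Set (EuclideanSpace ℝ (Fin nx)))
    (C : EuclideanSpace ℝ (Fin nx) →ₗ[ℝ] EuclideanSpace ℝ (Fin np))
    (A : Fin M → EuclideanSpace ℝ (Fin np)) (b : Fin M → ℝ)
    (hA : ∀ m, ‖A m‖ = 1)
    (hOne : ({p : EuclideanSpace ℝ (Fin np) | ∀ m', ⟪A m', p⟫ ≤ b m'}).Nonempty)
    (hOc : IsCompact {p : EuclideanSpace ℝ (Fin np) | ∀ m', ⟪A m', p⟫ ≤ b m'})
    (dmin β : ℝ) (hd : 0 < dmin) (hβ : β ∈ Set.Ioo (0 : ℝ) 1)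
    (B : Set (Measure (EuclideanSpace ℝ (Fin np))))
    (hB : ∀ Q ∈ B, IsProbabilityMeasure Q ∧ Q Wᶜ = 0)
    (x : EuclideanSpace ℝ (Fin nx)) (hx : x ∈ X)
    (hm : ∃ m : Fin M, ∀ Q ∈ B,
      cvar Q β (fun w => b m + ⟪A m, w⟫ + dmin - ⟪A m, C x⟫) ≤ 0) :
    ∀ Q ∈ B, cvar Q β (fun w => dmin - Metric.infDist (C x)
      ((fun p => p + w) '' {p : EuclideanSpace ℝ (Fin np) | ∀ m', ⟪A m', p⟫ ≤ b m'})) ≤ 0 :=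
  inner_estimate_DR_safe_set_general W hW C A b hA hOne dmin β hβ B hB x hm
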